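/- For complex numbers q, y, z with |q| < 1, the trivariate generalization ω(y,z;q) := Σ_{n≥0} yⁿ zⁿ q^{2n²+2n} / ((yq; q²)_{n+1} (zq; q²)_{n+1}) equals Σ_{n≥0} yⁿ qⁿ / (zq; q²)_{n+1}, whenever all series converge absolutely and no denominator vanishes. -/

import Mathlib

open scoped BigOperators

/-- Finite q-Pochhammer symbol `(a; q)_n`. -/
noncomputable def qPoch (a q : ℂ) (n : ℕ) : ℂ :=
  ∏ k ∈ Finset.range n, (1 - a * q ^ k)

/-- Infinite q-Pochhammer symbol `(a; q)_∞`. -/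
noncomputable def qPochInf (a q : ℂ) : ℂ :=
  ∏' k : ℕ, (1 - a * q ^ k)

/-!
Expanding `1 / (yq; q²)_{n+1}` by the q-binomial theorem
`∑_j [n+j choose j]_Q t^j = 1 / (t; Q)_{n+1}` turns the left-hand side into an absolutely
convergent double series. Summed along the antidiagonals `n + j = N` instead, the `N`-th block
collapses to `y^N q^N / (zq; q²)_{N+1}` by the terminating identity
`∑_{i+j=N} [N choose i]_Q Q^{i²} x^i (xQ^{i+1}; Q)_j = 1`, which follows from Pascal's rule by
induction on `N` with `x ↦ xQ`.
-/

open Finset Filter Topology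

section QPochhammer

variable {a q : ℂ}

theorem qPoch_zero (a q : ℂ) : qPoch a q 0 = 1 :=
  prod_range_zero _

theorem qPoch_succ (a q : ℂ) (n : ℕ) : qPoch a q (n + 1) = qPoch a q n * (1 - a * q ^ n) :=
  prod_range_succ _ _

theorem qPoch_succ' (a q : ℂ) (n : ℕ) : qPoch a q (n + 1) = (1 - a) * qPoch (a * q) q n := by
  simp only [qPoch, prod_range_succ', pow_zero, mul_one, pow_succ', mul_assoc, mul_comm]

theorem qPoch_add (a q : ℂ) (m n : ℕ) :
    qPoch a q (m + n) = qPoch a q m * qPoch (a * q ^ m) q n := by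
  simp only [qPoch, prod_range_add, pow_add, mul_assoc]

theorem qPoch_ne_zero (ha : ∀ k, 1 - a * q ^ k ≠ 0) (n : ℕ) : qPoch a q n ≠ 0 :=
  prod_ne_zero_iff.2 fun k _ => ha k

theorem one_sub_mul_pow_ne_zero (ha : ‖a‖ < 1) (hq : ‖q‖ ≤ 1) (k : ℕ) :
    1 - a * q ^ k ≠ 0 := by
  refine sub_ne_zero.2 fun h => ?_
  have : ‖a * q ^ k‖ < 1 := by
    rw [norm_mul, norm_pow]
    exact mul_lt_one_of_nonneg_of_lt_one_left (norm_nonneg a) ha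
      (pow_le_one₀ (norm_nonneg q) hq)
  simp [← h] at this

theorem norm_qPoch_le_two_pow (ha : ‖a‖ ≤ 1) (hq : ‖q‖ ≤ 1) (n : ℕ) :
    ‖qPoch a q n‖ ≤ 2 ^ n := by
  rw [qPoch, norm_prod]
  refine (prod_le_prod (g := fun _ => 2) (fun _ _ => norm_nonneg _) fun k _ => ?_).trans_eq
    (by simp)
  calc ‖1 - a * q ^ k‖ ≤ 1 + ‖a‖ * ‖q‖ ^ k := by simpa using norm_sub_le (1 : ℂ) (a * q ^ k)
    _ ≤ 1 + 1 := by
        gcongr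
        exact mul_le_one₀ ha (by positivity) (pow_le_one₀ (norm_nonneg q) hq)
    _ = 2 := by norm_num

theorem exists_norm_inv_qPoch_le_pow (hq : ‖q‖ < 1) :
    ∃ M ≥ 0, ∀ n, ‖(qPoch a q n)⁻¹‖ ≤ M ^ n := by
  have hlim : Tendsto (fun k => ‖(1 - a * q ^ k)⁻¹‖) atTop (𝓝 1) := by
    have := ((tendsto_pow_atTop_nhds_zero_of_norm_lt_one hq).const_mul a).const_sub 1
    simpa using (this.inv₀ (by simp)).norm
  obtain ⟨M, hM⟩ := hlim.bddAbove_range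
  refine ⟨M, (norm_nonneg _).trans (hM ⟨0, rfl⟩), fun n => ?_⟩
  rw [qPoch, ← prod_inv_distrib, norm_prod]
  exact (prod_le_prod (fun _ _ => norm_nonneg _) fun k _ => hM ⟨k, rfl⟩).trans_eq (by simp)

end QPochhammer

section GaussBinomial

variable {Q : ℂ}

noncomputable def gaussBinom (Q : ℂ) (i j : ℕ) : ℂ :=
  qPoch Q Q (i + j) / (qPoch Q Q i * qPoch Q Q j)

theorem gaussBinom_comm (Q : ℂ) (i j : ℕ) : gaussBinom Q i j = gaussBinom Q j i := by
  rw [gaussBinom, gaussBinom, add_comm, mul_comm]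

theorem qPoch_self_ne_zero (hQ : ‖Q‖ < 1) (n : ℕ) : qPoch Q Q n ≠ 0 :=
  qPoch_ne_zero (one_sub_mul_pow_ne_zero hQ hQ.le) n

theorem gaussBinom_zero_left (hQ : ‖Q‖ < 1) (j : ℕ) : gaussBinom Q 0 j = 1 := by
  rw [gaussBinom, zero_add, qPoch_zero, one_mul, div_self (qPoch_self_ne_zero hQ j)]

theorem gaussBinom_zero_right (hQ : ‖Q‖ < 1) (i : ℕ) : gaussBinom Q i 0 = 1 := by
  rw [gaussBinom_comm, gaussBinom_zero_left hQ]

theorem gaussBinom_succ_succ (hQ : ‖Q‖ < 1) (i j : ℕ) :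
    gaussBinom Q (i + 1) (j + 1) =
      Q ^ (i + 1) * gaussBinom Q (i + 1) j + gaussBinom Q i (j + 1) := by
  have hi := qPoch_self_ne_zero hQ i
  have hj := qPoch_self_ne_zero hQ j
  have hi' := one_sub_mul_pow_ne_zero hQ hQ.le i
  have hj' := one_sub_mul_pow_ne_zero hQ hQ.le j
  rw [gaussBinom, gaussBinom, gaussBinom, Nat.add_add_add_comm, Nat.add_right_comm i 1 j,
    ← Nat.add_assoc i j 1, qPoch_succ, qPoch_succ, qPoch_succ, qPoch_succ]
  field_simp
  ring

theorem gaussBinom_eq_qPoch_div (hQ : ‖Q‖ < 1) (i j : ℕ) :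
    gaussBinom Q i j = qPoch (Q ^ (j + 1)) Q i / qPoch Q Q i := by
  rw [gaussBinom_comm, gaussBinom, qPoch_add, ← pow_succ']
  field_simp [qPoch_self_ne_zero hQ]

theorem exists_norm_gaussBinom_le_pow (hQ : ‖Q‖ < 1) :
    ∃ C ≥ 0, ∀ i j, ‖gaussBinom Q i j‖ ≤ C ^ i := by
  obtain ⟨M, hM0, hM⟩ := exists_norm_inv_qPoch_le_pow (a := Q) hQ
  refine ⟨2 * M, by positivity, fun i j => ?_⟩
  have hpow : ‖Q ^ (j + 1)‖ ≤ 1 := by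
    rw [norm_pow]; exact pow_le_one₀ (norm_nonneg Q) hQ.le
  rw [gaussBinom_eq_qPoch_div hQ, div_eq_mul_inv, norm_mul, mul_pow]
  exact mul_le_mul (norm_qPoch_le_two_pow hpow hQ.le i) (hM i) (norm_nonneg _) (by positivity)

theorem sum_antidiagonal_succ_gaussBinom_mul (hQ : ‖Q‖ < 1) (f : ℕ → ℕ → ℂ) (N : ℕ) :
    ∑ p ∈ antidiagonal (N + 1), gaussBinom Q p.1 p.2 * f p.1 p.2 =
      ∑ p ∈ antidiagonal N,
        gaussBinom Q p.1 p.2 * (Q ^ p.1 * f p.1 (p.2 + 1) + f (p.1 + 1) p.2) := by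
  simp only [mul_add, sum_add_distrib]
  cases N with
  | zero =>
    simp [Nat.sum_antidiagonal_succ, gaussBinom_zero_left hQ, gaussBinom_zero_right hQ]
  | succ M =>
    rw [Nat.sum_antidiagonal_succ, Nat.sum_antidiagonal_succ', Nat.sum_antidiagonal_succ,
      Nat.sum_antidiagonal_succ' (f := fun p => gaussBinom Q p.1 p.2 * f (p.1 + 1) p.2)]
    simp only [gaussBinom_succ_succ hQ, gaussBinom_zero_left hQ, gaussBinom_zero_right hQ,
      add_mul, sum_add_distrib, mul_assoc, mul_left_comm (gaussBinom Q _ _) (Q ^ _)]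
    ring

end GaussBinomial

theorem HasSum.sum_antidiagonal {α A : Type*} [AddCommMonoid α] [TopologicalSpace α]
    [ContinuousAdd α] [RegularSpace α] [AddCommMonoid A] [HasAntidiagonal A] {f : A × A → α} {a : α}
    (h : HasSum f a) : HasSum (fun n => ∑ p ∈ antidiagonal n, f p) a :=
  (HasAntidiagonal.sigmaAntidiagonalEquivProd.hasSum_iff.2 h).sigma fun n =>
    (antidiagonal n).hasSum f

theorem summable_pow_mul_pow_sq {r : ℝ} (hr0 : 0 ≤ r) (hr1 : r < 1) (c : ℝ) :
    Summable fun n : ℕ => c ^ n * r ^ (n ^ 2) := by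
  have hlim : Tendsto (fun n => ‖c * r ^ n‖) atTop (𝓝 0) := by
    simpa using ((tendsto_pow_atTop_nhds_zero_of_lt_one hr0 hr1).const_mul c).norm
  refine summable_geometric_two.of_norm_bounded_eventually_nat ?_
  filter_upwards [hlim.eventually (eventually_le_nhds (by norm_num : (0 : ℝ) < 1 / 2))]
    with n hn
  rw [show c ^ n * r ^ (n ^ 2) = (c * r ^ n) ^ n by ring, norm_pow]
  exact pow_le_pow_left₀ (norm_nonneg _) hn n

section Identities

variable {Q t x : ℂ}

theorem hasSum_gaussBinom_mul_pow (hQ : ‖Q‖ < 1) (n : ℕ) (ht : ‖t‖ < 1) :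
    HasSum (fun j => gaussBinom Q n j * t ^ j) (qPoch t Q (n + 1))⁻¹ := by
  induction n generalizing t with
  | zero =>
    simpa [gaussBinom_zero_left hQ, qPoch] using hasSum_geometric_of_norm_lt_one ht
  | succ n ih =>
    have htQ : ‖t * Q‖ < 1 := by
      rw [norm_mul]; exact mul_lt_one_of_nonneg_of_lt_one_left (norm_nonneg t) ht hQ.le
    obtain ⟨C, -, hC⟩ := exists_norm_gaussBinom_le_pow hQ
    have hs : Summable fun j => gaussBinom Q (n + 1) j * t ^ j := by
      refine ((summable_geometric_of_lt_one (norm_nonneg t) ht).mul_left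
        (C ^ (n + 1))).of_norm_bounded fun j => ?_
      rw [norm_mul, norm_pow]
      exact mul_le_mul_of_nonneg_right (hC _ _) (by positivity)
    obtain ⟨A, hAsum⟩ := hs
    have hshift : HasSum (fun j => gaussBinom Q (n + 1) (j + 1) * t ^ (j + 1)) (A - 1) := by
      simpa [gaussBinom_zero_right hQ] using (hasSum_nat_add_iff' 1).2 hAsum
    have hih : HasSum (fun j => gaussBinom Q n (j + 1) * (t * Q) ^ (j + 1))
        ((qPoch (t * Q) Q (n + 1))⁻¹ - 1) := by
      simpa [gaussBinom_zero_right hQ] using (hasSum_nat_add_iff' 1).2 (ih htQ)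
    -- Pascal's rule splits the shifted series into `t` times itself plus the series for `n`.
    have hpascal : HasSum (fun j => gaussBinom Q (n + 1) (j + 1) * t ^ (j + 1))
        (t * A + ((qPoch (t * Q) Q (n + 1))⁻¹ - 1)) := by
      refine ((hAsum.mul_left t).add hih).congr_fun fun j => ?_
      rw [gaussBinom_comm, gaussBinom_succ_succ hQ, gaussBinom_comm Q (j + 1),
        gaussBinom_comm Q j]
      ring
    have ht1 : 1 - t ≠ 0 := sub_ne_zero.2 fun h => by simp [← h] at ht
    have hA : A = (qPoch t Q (n + 2))⁻¹ := by
      rw [qPoch_succ', mul_inv, eq_inv_mul_iff_mul_eq₀ ht1]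
      linear_combination hshift.unique hpascal
    exact hA ▸ hAsum

theorem sum_antidiagonal_gaussBinom_mul_qPoch (hQ : ‖Q‖ < 1) (N : ℕ) (x : ℂ) :
    ∑ p ∈ antidiagonal N,
      gaussBinom Q p.1 p.2 * (Q ^ (p.1 ^ 2) * x ^ p.1 * qPoch (x * Q ^ (p.1 + 1)) Q p.2) =
        1 := by
  induction N generalizing x with
  | zero => simp [gaussBinom_zero_left hQ, qPoch_zero]
  | succ N ih =>
    refine (sum_antidiagonal_succ_gaussBinom_mul hQ
      (fun i j => Q ^ (i ^ 2) * x ^ i * qPoch (x * Q ^ (i + 1)) Q j) N).trans ?_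
    rw [← ih (x * Q)]
    refine sum_congr rfl fun p _ => ?_
    rw [qPoch_succ', show x * Q ^ (p.1 + 1) * Q = x * Q * Q ^ (p.1 + 1) by ring,
      show x * Q ^ (p.1 + 1 + 1) = x * Q * Q ^ (p.1 + 1) by ring]
    ring

theorem sum_antidiagonal_gaussBinom_mul_div_qPoch (hQ : ‖Q‖ < 1) (hx : ∀ k, 1 - x * Q ^ k ≠ 0)
    (N : ℕ) :
    ∑ p ∈ antidiagonal N,
      gaussBinom Q p.1 p.2 * (Q ^ (p.1 ^ 2) * x ^ p.1 / qPoch x Q (p.1 + 1)) =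
        (qPoch x Q (N + 1))⁻¹ := by
  rw [← one_div, ← sum_antidiagonal_gaussBinom_mul_qPoch hQ N x, sum_div]
  refine sum_congr rfl fun p hp => ?_
  rw [← mem_antidiagonal.1 hp, add_right_comm, qPoch_add x Q (p.1 + 1)]
  have htail : qPoch (x * Q ^ (p.1 + 1)) Q p.2 ≠ 0 :=
    qPoch_ne_zero (fun k => by rw [mul_assoc, ← pow_add]; exact hx _) _
  field_simp [qPoch_ne_zero hx]

theorem summable_gaussBinom_mul_div_qPoch_mul_pow (hQ : ‖Q‖ < 1) (ht : ‖t‖ < 1) (x : ℂ) :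
    Summable fun p : ℕ × ℕ => gaussBinom Q p.1 p.2 *
      (Q ^ (p.1 ^ 2) * x ^ p.1 / qPoch x Q (p.1 + 1)) * t ^ (p.1 + p.2) := by
  obtain ⟨C, hC0, hC⟩ := exists_norm_gaussBinom_le_pow hQ
  obtain ⟨M, hM0, hM⟩ := exists_norm_inv_qPoch_le_pow (a := x) hQ
  have hrow := (summable_pow_mul_pow_sq (norm_nonneg Q) hQ (C * ‖x‖ * M * ‖t‖)).mul_left M
  have hcol := summable_geometric_of_lt_one (norm_nonneg t) ht
  refine (hrow.mul_of_nonneg hcol (fun n => by positivity) fun j => by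
    positivity).of_norm_bounded fun p => ?_
  calc _ = ‖gaussBinom Q p.1 p.2‖ *
        (‖Q‖ ^ (p.1 ^ 2) * ‖x‖ ^ p.1 * ‖(qPoch x Q (p.1 + 1))⁻¹‖) * ‖t‖ ^ (p.1 + p.2) := by
        simp [div_eq_mul_inv]
    _ ≤ C ^ p.1 * (‖Q‖ ^ (p.1 ^ 2) * ‖x‖ ^ p.1 * M ^ (p.1 + 1)) * ‖t‖ ^ (p.1 + p.2) := by
        gcongr
        exacts [hC _ _, hM _]
    _ = M * ((C * ‖x‖ * M * ‖t‖) ^ p.1 * ‖Q‖ ^ (p.1 ^ 2)) * ‖t‖ ^ p.2 := by ring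

theorem tsum_pow_mul_pow_mul_pow_sq_div_qPoch_mul_qPoch (hQ : ‖Q‖ < 1) (ht : ‖t‖ < 1)
    (hx : ∀ k, 1 - x * Q ^ k ≠ 0) :
    ∑' n : ℕ, t ^ n * x ^ n * Q ^ (n ^ 2) / (qPoch t Q (n + 1) * qPoch x Q (n + 1)) =
      ∑' n : ℕ, t ^ n / qPoch x Q (n + 1) := by
  set F : ℕ × ℕ → ℂ := fun p =>
    gaussBinom Q p.1 p.2 * (Q ^ (p.1 ^ 2) * x ^ p.1 / qPoch x Q (p.1 + 1)) * t ^ (p.1 + p.2)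
  have hF : HasSum F (∑' p, F p) := (summable_gaussBinom_mul_div_qPoch_mul_pow hQ ht x).hasSum
  have hrow (n : ℕ) : HasSum (fun j => F (n, j))
      (t ^ n * x ^ n * Q ^ (n ^ 2) / (qPoch t Q (n + 1) * qPoch x Q (n + 1))) := by
    rw [show t ^ n * x ^ n * Q ^ (n ^ 2) / (qPoch t Q (n + 1) * qPoch x Q (n + 1)) =
      Q ^ (n ^ 2) * x ^ n / qPoch x Q (n + 1) * t ^ n * (qPoch t Q (n + 1))⁻¹ by ring]
    exact ((hasSum_gaussBinom_mul_pow hQ n ht).mul_left _).congr_fun fun j => by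
      simp only [F]; ring
  have hdiag (N : ℕ) : ∑ p ∈ antidiagonal N, F p = t ^ N / qPoch x Q (N + 1) := by
    rw [div_eq_mul_inv, ← sum_antidiagonal_gaussBinom_mul_div_qPoch hQ hx N, mul_sum]
    exact sum_congr rfl fun p hp => by rw [← mem_antidiagonal.1 hp]; simp only [F]; ring
  have hrhs := hF.sum_antidiagonal
  simp only [hdiag] at hrhs
  exact (hF.prod_fiberwise hrow).tsum_eq.trans hrhs.tsum_eq.symm

end Identities

theorem omega_trivariate_general (q y z : ℂ) (hq : ‖q‖ < 1) (hy : ‖y‖ < 1)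
    (hdz : ∀ k : ℕ, 1 - z * q ^ (2 * k + 1) ≠ 0) :
    ∑' n : ℕ, y ^ n * z ^ n * q ^ (2 * n ^ 2 + 2 * n) /
        (qPoch (y * q) (q ^ 2) (n + 1) * qPoch (z * q) (q ^ 2) (n + 1))
      = ∑' n : ℕ, y ^ n * q ^ n / qPoch (z * q) (q ^ 2) (n + 1) := by
  have hQ : ‖q ^ 2‖ < 1 := by
    rw [norm_pow]; exact pow_lt_one₀ (norm_nonneg q) hq two_ne_zero
  have ht : ‖y * q‖ < 1 := by
    rw [norm_mul]; exact mul_lt_one_of_nonneg_of_lt_one_left (norm_nonneg y) hy hq.le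
  have hx (k : ℕ) : 1 - z * q * (q ^ 2) ^ k ≠ 0 := by
    rw [← pow_mul, mul_assoc, ← pow_succ']; exact hdz k
  calc _ = ∑' n : ℕ, (y * q) ^ n * (z * q) ^ n * (q ^ 2) ^ (n ^ 2) /
        (qPoch (y * q) (q ^ 2) (n + 1) * qPoch (z * q) (q ^ 2) (n + 1)) :=
        tsum_congr fun n => by ring
    _ = ∑' n : ℕ, (y * q) ^ n / qPoch (z * q) (q ^ 2) (n + 1) :=
        tsum_pow_mul_pow_mul_pow_sq_div_qPoch_mul_qPoch hQ ht hx
    _ = _ := tsum_congr fun n => by ring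

theorem omega_trivariate (q y z : ℂ) (hq : ‖q‖ < 1) (hy : ‖y‖ < 1)
    (hdy : ∀ k : ℕ, 1 - y * q ^ (2 * k + 1) ≠ 0)
    (hdz : ∀ k : ℕ, 1 - z * q ^ (2 * k + 1) ≠ 0)
    (hL : Summable fun n : ℕ =>
      ‖y ^ n * z ^ n * q ^ (2 * n ^ 2 + 2 * n) /
        (qPoch (y * q) (q ^ 2) (n + 1) * qPoch (z * q) (q ^ 2) (n + 1))‖)
    (hR : Summable fun n : ℕ => ‖y ^ n * q ^ n / qPoch (z * q) (q ^ 2) (n + 1)‖) :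
    ∑' n : ℕ, y ^ n * z ^ n * q ^ (2 * n ^ 2 + 2 * n) /
        (qPoch (y * q) (q ^ 2) (n + 1) * qPoch (z * q) (q ^ 2) (n + 1))
      = ∑' n : ℕ, y ^ n * q ^ n / qPoch (z * q) (q ^ 2) (n + 1) :=
  omega_trivariate_general q y z hq hy hdz
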